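/- (Fourier-analytic Koksma inequality) If f : O → ℝ is a continuous function and X is a finite nonempty subset of O with discrepancy Δ(X), then |(1/|X|)·Σ_{x∈X} f(x) − ∫_O f dμ| ≤ V_Fourier(f)·Δ(X). -/

import Mathlib

open MeasureTheory Set Filter Topology
open scoped ENNReal NNReal

noncomputable section

namespace NAKoksma

variable (K : Type*) [NontriviallyNormedField K] [IsUltrametricDist K]

/-- The ring of integers `O = {x : K | ‖x‖ ≤ 1}` of a non-Archimedean normed field. -/
def RoI : Subring K where
  carrier := {x : K | ‖x‖ ≤ 1}
  mul_mem' := fun {a b} ha hb => by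
    simp only [Set.mem_setOf_eq] at *
    calc ‖a * b‖ = ‖a‖ * ‖b‖ := norm_mul a b
      _ ≤ 1 * 1 := mul_le_mul ha hb (norm_nonneg b) zero_le_one
      _ = 1 := one_mul 1
  one_mem' := by simp
  add_mem' := fun {a b} ha hb => by
    simp only [Set.mem_setOf_eq] at *
    exact (IsUltrametricDist.norm_add_le_max a b).trans (max_le ha hb)
  zero_mem' := by simp
  neg_mem' := fun {a} ha => by
    simp only [Set.mem_setOf_eq, norm_neg] at *
    exact ha

variable (q : ℕ)

/-- The disc of radius `q ^ (-n)` centered at `a` in the ring of integers. -/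
def disc (a : RoI K) (n : ℕ) : Set (RoI K) :=
  {x : RoI K | ‖(x : K) - (a : K)‖ ≤ (q : ℝ) ^ (-(n : ℤ))}

/-- A subset of `O` is a disc if it is of the form `D_r(a)` with `r = q^(-n)`, `0 < r ≤ 1`. -/
def IsDisc (D : Set (RoI K)) : Prop := ∃ (a : RoI K) (n : ℕ), D = disc K q a n

/-- A Taibleson partition: a finite collection of discs partitioning `O`. -/
def IsTaibPartition (P : Finset (Set (RoI K))) : Prop :=
  (∀ D ∈ P, IsDisc K q D) ∧ (P : Set (Set (RoI K))).PairwiseDisjoint id ∧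
    ⋃₀ (P : Set (Set (RoI K))) = Set.univ

/-- `V_Π(f) = Σ_{D ∈ Π} sup_{x,y ∈ D} (f x - f y)`, valued in `[0,∞]`. -/
def VPi (f : RoI K → ℝ) (P : Finset (Set (RoI K))) : ℝ≥0∞ :=
  ∑ D ∈ P, ⨆ x ∈ D, ⨆ y ∈ D, ENNReal.ofReal (f x - f y)

/-- The Taibleson variation `V_Taib(f) = sup_Π V_Π(f)`. -/
def VTaib (f : RoI K → ℝ) : ℝ≥0∞ :=
  ⨆ P : {P : Finset (Set (RoI K)) // IsTaibPartition K q P}, VPi K f P.1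

variable [MeasurableSpace K]

/-- The discrepancy `Δ(X) = sup_D | |X ∩ D| / |X| - μ(D) |` of a finite set `X ⊆ O`. -/
def discrepancy (μ : Measure (RoI K)) (X : Finset (RoI K)) : ℝ :=
  ⨆ D : {D : Set (RoI K) // IsDisc K q D},
    |(Nat.card ↥((X : Set (RoI K)) ∩ D.1) : ℝ) / (X.card : ℝ) - (μ D.1).toReal|

variable (π : RoI K)

/-- The `i`-th point `m_i = a_0 + a_1 π + ⋯ + a_{λ-1} π^{λ-1}` in the dictionary
ordering of the coefficient strings `(a_0, …, a_{λ-1})` with respect to the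
indexing of the coset representatives `S`. -/
def beerPoint (S : ℕ → RoI K) (lam i : ℕ) : RoI K :=
  ∑ j ∈ Finset.range lam, S (i / q ^ (lam - 1 - j) % q) * π ^ j

/-- `V_λ(f) = sup_{x_i ∈ E_i} Σ_{i=1}^{q^λ - 1} |f(x_i) - f(x_{i-1})|` over the ordered Beer
partition `E_0, …, E_{q^λ - 1}` of level `λ`. -/
def VBeerLevel (S : ℕ → RoI K) (f : RoI K → ℝ) (lam : ℕ) : ℝ≥0∞ :=
  ⨆ x : {x : ℕ → RoI K // ∀ i < q ^ lam, x i ∈ disc K q (beerPoint K q π S lam i) lam},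
    ∑ i ∈ Finset.Ico 1 (q ^ lam), ENNReal.ofReal |f (x.1 i) - f (x.1 (i - 1))|

/-- The Beer variation `V_Beer(f) = lim_{λ→∞} V_λ(f) = sup_{λ ≥ 1} V_λ(f)`. -/
def VBeer (S : ℕ → RoI K) (f : RoI K → ℝ) : ℝ≥0∞ :=
  ⨆ lam : ℕ, VBeerLevel K q π S f (lam + 1)

/-- `S : ℕ → O` (through indices `0, …, q-1`) is a complete ordered system of coset
representatives for the residue field `O/πO`, containing `0`. -/
def IsRepSystem (S : ℕ → RoI K) : Prop :=
  (∃ i, i < q ∧ S i = 0) ∧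
    Function.Bijective fun i : Fin q => Ideal.Quotient.mk (Ideal.span {π}) (S (i : ℕ))

/-- The Berkovich-analytic variation
`V_Berk(f) = Σ_D Σ_{D' ≺ D} |f(D') - f(D)|`, where `D' ≺ D` means `D' ⊆ D` and
`μ(D') = μ(D)/q`, and `f(D)` denotes the average of `f` over `D`. -/
def VBerk (μ : Measure (RoI K)) (f : RoI K → ℝ) : ℝ≥0∞ :=
  ∑' D : {D : Set (RoI K) // IsDisc K q D},
    ∑' D' : {D' : Set (RoI K) // IsDisc K q D' ∧ D' ⊆ D.1 ∧ μ D' = μ D.1 / (q : ℝ≥0∞)},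
      ENNReal.ofReal |(⨍ x in D'.1, f x ∂μ) - ⨍ x in D.1, f x ∂μ|

/-- The level `ℓ(γ)` of a character `γ : O → 𝕋`: the least `ℓ ≥ 0` such that `γ` is trivial
on `π^ℓ O`. -/
def charLevel (γ : AddChar (RoI K) Circle) : ℕ :=
  sInf {l : ℕ | ∀ y : RoI K, γ (π ^ l * y) = 1}

/-- The Fourier coefficient `f̂(γ) = ∫_O f(x) conj(γ(x)) dμ(x)`. -/
def fourierCoeff (μ : Measure (RoI K)) (f : RoI K → ℂ) (γ : AddChar (RoI K) Circle) : ℂ :=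
  ∫ x, f x * (starRingEnd ℂ) ((γ x : Circle) : ℂ) ∂μ

/-- The Fourier-analytic variation `V_Fourier(f) = Σ_{γ ≠ γ₀} q^{ℓ(γ)} |f̂(γ)|`, the sum over
all nontrivial continuous characters of `O`. -/
def VFourier (μ : Measure (RoI K)) (f : RoI K → ℝ) : ℝ≥0∞ :=
  ∑' γ : {γ : AddChar (RoI K) Circle // Continuous ⇑γ ∧ γ ≠ 1},
    ENNReal.ofReal ((q : ℝ) ^ charLevel K π γ.1 * ‖fourierCoeff K μ (fun x => (f x : ℂ)) γ.1‖)

/-- A function is a finite linear combination of characteristic functions of discs. -/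
def IsDiscSimple (g : RoI K → ℝ) : Prop :=
  ∃ (P : Finset (Set (RoI K))) (c : Set (RoI K) → ℝ),
    (∀ D ∈ P, IsDisc K q D) ∧ g = fun x => ∑ D ∈ P, c D * D.indicator 1 x

/-- Integrability in the sense of Beer: `f` can be squeezed between finite linear combinations
of characteristic functions of discs with integrals converging to each other. -/
def BeerIntegrable [MeasurableSpace K] (μ : Measure (RoI K)) (f : RoI K → ℝ) : Prop :=
  ∃ u v : ℕ → RoI K → ℝ,
    (∀ n, IsDiscSimple K q (u n)) ∧ (∀ n, IsDiscSimple K q (v n)) ∧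
    (∀ n x, u n x ≤ f x ∧ f x ≤ v n x) ∧
    Tendsto (fun n => ∫ x, (v n x - u n x) ∂μ) atTop (𝓝 0)

variable [LocallyCompactSpace K] [BorelSpace K]

/-!
For each `n`, replace `f` by its averages over the discs of radius `q ^ (-n)`. These discs are the
cosets of the open subgroup `π ^ n O`, so the averaged function lives on the finite group
`O ⧸ π ^ n O`, and finite Fourier inversion writes its mean over `X` minus `∫ f` as a sum, over the
nontrivial characters `γ` of that group, of `f̂ γ` times the mean of `γ` over `X`. As a character
of `O` of level `ℓ`, such a `γ` factors through `O ⧸ π ^ ℓ O`, whose `≤ q ^ ℓ` cosets are discs;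
since `γ` sums to zero over them, its mean over `X` is at most `q ^ ℓ Δ(X)`. This proves the
inequality for the averaged function, and letting `n → ∞` recovers `f` by continuity.
-/

section FiniteAbelian

open Finset

variable {A ι : Type*} [AddCommGroup A] [Fintype A] [DecidableEq A]

/-- Since a nontrivial character sums to zero over `A`, the fibre counts may be shifted by any
constant `t` before applying the triangle inequality. -/
lemma norm_sum_addChar_comp_le {ψ : AddChar A ℂ} (hψ : ψ ≠ 0) (X : Finset ι) (φ : ι → A)
    (t : ℝ) : ‖∑ x ∈ X, ψ (φ x)‖ ≤ ∑ a, |(#{x ∈ X | φ x = a} : ℝ) - t| := by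
  have hshift : ∑ x ∈ X, ψ (φ x) = ∑ a, (((#{x ∈ X | φ x = a} : ℝ) - t : ℝ) : ℂ) * ψ a := by
    simp only [Complex.ofReal_sub, Complex.ofReal_natCast, sub_mul, sum_sub_distrib, ← mul_sum,
      AddChar.sum_eq_zero_iff_ne_zero.2 hψ, mul_zero, sub_zero, ← sum_fiberwise' X φ ψ,
      sum_const, nsmul_eq_mul]
  rw [hshift]
  refine (norm_sum_le _ _).trans_eq (sum_congr rfl fun a _ => ?_)
  rw [norm_mul, AddChar.norm_apply, mul_one, Complex.norm_real, Real.norm_eq_abs]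

end FiniteAbelian

lemma AddChar.exists_comp_mk_eq {G M : Type*} [AddCommGroup G] [Monoid M] {H : AddSubgroup G}
    (χ : AddChar G M) (hχ : ∀ h ∈ H, χ h = 1) : ∃ ψ : AddChar (G ⧸ H) M, ∀ x : G, ψ x = χ x :=
  ⟨AddChar.toAddMonoidHomEquiv.symm (QuotientAddGroup.lift H (AddChar.toAddMonoidHomEquiv χ)
    fun h hh => by simpa [AddMonoidHom.mem_ker] using hχ h hh), fun _ => rfl⟩

lemma tendsto_setAverage_of_continuousAt {X E ι : Type*} [TopologicalSpace X]
    [MeasurableSpace X] [OpensMeasurableSpace X] [NormedAddCommGroup E] [NormedSpace ℝ E]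
    [CompleteSpace E] {μ : Measure X} [IsFiniteMeasure μ] {f : X → E} {x : X}
    (hf : ContinuousAt f x) (hfm : StronglyMeasurableAtFilter f (𝓝 x) μ) {s : ι → Set X}
    {l : Filter ι} (hs : Tendsto s l (𝓝 x).smallSets) (hμ : ∀ i, μ (s i) ≠ 0) :
    Tendsto (fun i => ⨍ y in s i, f y ∂μ) l (𝓝 (f x)) := by
  have h := (hf.integral_sub_linear_isLittleO_ae hfm hs).tendsto_inv_smul_nhds_zero
  refine tendsto_sub_nhds_zero_iff.1 (h.congr fun i => ?_)
  have hm : μ.real (s i) ≠ 0 := (measureReal_ne_zero_iff (measure_ne_top μ _)).2 (hμ i)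
  rw [smul_sub, smul_smul, inv_mul_cancel₀ hm, one_smul, setAverage_eq]

section DiscreteQuotient

variable {G : Type*} [AddCommGroup G] {H : AddSubgroup G}

section Characters

variable [Finite (G ⧸ H)]

variable (H) in
def liftChar (ψ : AddChar (G ⧸ H) ℂ) : AddChar G Circle :=
  (AddChar.circleEquivComplex.symm ψ).compAddMonoidHom (QuotientAddGroup.mk' H)

@[simp]
lemma coe_liftChar_apply (ψ : AddChar (G ⧸ H) ℂ) (x : G) : (liftChar H ψ x : ℂ) = ψ x := rfl

lemma liftChar_injective : Function.Injective (liftChar H) :=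
  (AddChar.compAddMonoidHom_injective_left _ (QuotientAddGroup.mk'_surjective H)).comp
    AddChar.circleEquivComplex.symm.injective

lemma liftChar_ne_one {ψ : AddChar (G ⧸ H) ℂ} (hψ : ψ ≠ 0) : liftChar H ψ ≠ 1 := by
  refine fun h => hψ (DFunLike.ext _ _ fun a => ?_)
  obtain ⟨x, rfl⟩ := QuotientAddGroup.mk_surjective a
  rw [← coe_liftChar_apply, h, AddChar.one_apply, AddChar.zero_apply, Circle.coe_one]

end Characters

variable [TopologicalSpace G] [DiscreteTopology (G ⧸ H)]

lemma continuous_comp_mk {Y : Type*} [TopologicalSpace Y] (φ : G ⧸ H → Y) :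
    Continuous fun x : G => φ x :=
  (continuous_of_discreteTopology (f := φ)).comp continuous_quot_mk

lemma measurableSet_mk_preimage [MeasurableSpace G] [OpensMeasurableSpace G] (a : G ⧸ H) :
    MeasurableSet (QuotientAddGroup.mk ⁻¹' {a} : Set G) :=
  ((isOpen_discrete _).preimage (continuous_comp_mk id)).measurableSet

variable [Finite (G ⧸ H)]

lemma continuous_liftChar (ψ : AddChar (G ⧸ H) ℂ) : Continuous (liftChar H ψ) :=
  continuous_comp_mk (AddChar.circleEquivComplex.symm ψ)

variable [MeasurableSpace G] [OpensMeasurableSpace G] [MeasurableAdd G] (μ : Measure G)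
  [IsProbabilityMeasure μ] [μ.IsAddLeftInvariant]

lemma measureReal_mk_preimage (a : G ⧸ H) :
    μ.real (QuotientAddGroup.mk ⁻¹' {a}) = (Nat.card (G ⧸ H) : ℝ)⁻¹ := by
  obtain ⟨b, rfl⟩ := QuotientAddGroup.mk_surjective a
  have hcoset : QuotientAddGroup.mk ⁻¹' {(b : G ⧸ H)} = (fun x => -b + x) ⁻¹' (H : Set G) := by
    ext x
    simp [eq_comm (a := (x : G ⧸ H)), QuotientAddGroup.eq]
  have hH : MeasurableSet (H : Set G) := by
    convert measurableSet_mk_preimage (0 : G ⧸ H)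
    ext x
    simp
  have := AddSubgroup.finiteIndex_of_finite_quotient (H := H)
  have hindex := H.index_mul_measure hH μ
  rw [measure_univ, AddSubgroup.index] at hindex
  have hμH : μ H = (Nat.card (G ⧸ H) : ℝ≥0∞)⁻¹ :=
    ENNReal.eq_inv_of_mul_eq_one_left (by rw [mul_comm]; exact hindex)
  rw [hcoset, measureReal_def, measure_preimage_add, hμH, ENNReal.toReal_inv,
    ENNReal.toReal_natCast]

open ComplexConjugate in
lemma sum_fourier_mul_apply (f : G → ℂ) (hf : Integrable f μ) (x : G) :
    ∑ ψ : AddChar (G ⧸ H) ℂ, (∫ y, f y * conj (ψ y) ∂μ) * ψ x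
      = ⨍ y in QuotientAddGroup.mk ⁻¹' {(x : G ⧸ H)}, f y ∂μ := by
  classical
  have := Fintype.ofFinite (G ⧸ H)
  have hint (ψ : AddChar (G ⧸ H) ℂ) : Integrable (fun y => f y * conj (ψ y) * ψ x) μ :=
    (hf.mul_bdd (c := 1) (continuous_comp_mk fun a => conj (ψ a)).aestronglyMeasurable
      (.of_forall fun y => by simp)).mul_const _
  calc _ = ∫ y, ∑ ψ : AddChar (G ⧸ H) ℂ, f y * conj (ψ y) * ψ x ∂μ := by
        rw [integral_finsetSum _ fun ψ _ => hint ψ]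
        simp only [integral_mul_const]
    _ = ∫ y, (QuotientAddGroup.mk ⁻¹' {(x : G ⧸ H)}).indicator
          (fun y => (Nat.card (G ⧸ H) : ℂ) * f y) y ∂μ := by
        congr 1
        ext y
        -- orthogonality: `∑ ψ, ψ (x - y)` is `#(G ⧸ H)` if `x - y ∈ H` and `0` otherwise
        simp only [mul_assoc, ← Finset.mul_sum, ← AddChar.map_neg_eq_conj,
          ← AddChar.map_add_eq_mul, AddChar.sum_apply_eq_ite, Set.indicator_apply,
          Set.mem_preimage, Set.mem_singleton_iff, neg_add_eq_zero, Nat.card_eq_fintype_card]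
        split_ifs <;> ring
    _ = _ := by
        rw [integral_indicator (measurableSet_mk_preimage _), integral_const_mul, setAverage_eq,
          measureReal_mk_preimage, inv_inv, Complex.real_smul, Complex.ofReal_natCast]

open ComplexConjugate Finset in
lemma average_setAverage_sub_integral_eq_sum (f : G → ℂ) (hf : Integrable f μ) {X : Finset G}
    (hX : X.Nonempty) :
    (#X : ℂ)⁻¹ * ∑ x ∈ X, ⨍ y in QuotientAddGroup.mk ⁻¹' {(x : G ⧸ H)}, f y ∂μ - ∫ y, f y ∂μ
      = ∑ ψ ∈ univ.erase (0 : AddChar (G ⧸ H) ℂ),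
          (∫ y, f y * conj (ψ y) ∂μ) * ((#X : ℂ)⁻¹ * ∑ x ∈ X, ψ x) := by
  classical
  have := Fintype.ofFinite (G ⧸ H)
  have hX' : (#X : ℂ) ≠ 0 := by exact_mod_cast hX.card_pos.ne'
  have hexpand : (#X : ℂ)⁻¹ * ∑ x ∈ X, ⨍ y in QuotientAddGroup.mk ⁻¹' {(x : G ⧸ H)}, f y ∂μ
      = ∑ ψ : AddChar (G ⧸ H) ℂ, (∫ y, f y * conj (ψ y) ∂μ) * ((#X : ℂ)⁻¹ * ∑ x ∈ X, ψ x) := by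
    simp only [← sum_fourier_mul_apply μ f hf, mul_sum]
    rw [sum_comm]
    exact sum_congr rfl fun _ _ => sum_congr rfl fun _ _ => by ring
  rw [hexpand, ← add_sum_erase _ _ (mem_univ 0)]
  simp [hX']

open Finset in
lemma norm_sum_addChar_le [DecidableEq (G ⧸ H)] {ψ : AddChar (G ⧸ H) ℂ} (hψ : ψ ≠ 0)
    {X : Finset G} (hX : X.Nonempty) {Δ : ℝ}
    (hΔ : ∀ a : G ⧸ H, |(#(X.filter fun x : G => (x : G ⧸ H) = a) : ℝ) / #X
      - μ.real (QuotientAddGroup.mk ⁻¹' {a})| ≤ Δ) :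
    ‖∑ x ∈ X, ψ x‖ ≤ Nat.card (G ⧸ H) * (#X * Δ) := by
  have := Fintype.ofFinite (G ⧸ H)
  have hN : (0 : ℝ) < #X := by exact_mod_cast hX.card_pos
  calc ‖∑ x ∈ X, ψ x‖
      ≤ ∑ a, |(#(X.filter fun x : G => (x : G ⧸ H) = a) : ℝ) - #X * (Nat.card (G ⧸ H) : ℝ)⁻¹| :=
        norm_sum_addChar_comp_le hψ X _ _
    _ ≤ ∑ _a : G ⧸ H, #X * Δ := sum_le_sum fun a _ => by
        have ha := hΔ a
        rw [measureReal_mk_preimage] at ha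
        calc _ = (#X : ℝ) * |(#(X.filter fun x : G => (x : G ⧸ H) = a) : ℝ) / #X
                - (Nat.card (G ⧸ H) : ℝ)⁻¹| := by
              rw [← abs_of_pos hN, ← abs_mul, abs_of_pos hN, mul_sub, mul_div_cancel₀ _ hN.ne']
          _ ≤ #X * Δ := mul_le_mul_of_nonneg_left ha hN.le
    _ = _ := by rw [sum_const, card_univ, nsmul_eq_mul, Nat.card_eq_fintype_card]

end DiscreteQuotient

omit [MeasurableSpace K] [BorelSpace K] in
instance : CompactSpace (RoI K) := by
  have : ProperSpace K := .of_nontriviallyNormedField_of_weaklyLocallyCompactSpace K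
  refine isCompact_iff_compactSpace.1 ?_
  convert isCompact_closedBall (0 : K) 1
  ext x
  simp [RoI]

omit [LocallyCompactSpace K] in
instance : BorelSpace (RoI K) := Subtype.borelSpace _

section IntegerRing

omit [MeasurableSpace K] [LocallyCompactSpace K] [BorelSpace K]

variable {K} {q} {π}

lemma apply_pi_pow_charLevel_mul {γ : AddChar (RoI K) Circle} {n : ℕ}
    (h : ∀ y, γ (π ^ n * y) = 1) (y : RoI K) : γ (π ^ charLevel K π γ * y) = 1 :=
  Nat.sInf_mem (s := {l | ∀ y, γ (π ^ l * y) = 1}) ⟨n, h⟩ y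

lemma norm_coe_le_one (x : RoI K) : ‖(x : K)‖ ≤ 1 := x.2

lemma disc_eq_closedBall (a : RoI K) (n : ℕ) :
    disc K q a n = Metric.closedBall a ((q : ℝ) ^ (-(n : ℤ))) := by
  ext x
  rw [Metric.mem_closedBall, Subtype.dist_eq, dist_eq_norm]
  rfl

variable (K) in
def levelSubgroup (hq : 0 < q) (n : ℕ) : AddSubgroup (RoI K) :=
  (IsUltrametricDist.closedBall_openAddSubgroup (RoI K) (r := (q : ℝ) ^ (-(n : ℤ)))
    (by positivity)).toAddSubgroup

variable (hq : 0 < q)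

instance (n : ℕ) : DiscreteTopology (RoI K ⧸ levelSubgroup K hq n) :=
  QuotientAddGroup.discreteTopology (OpenAddSubgroup.isOpen _)

lemma mem_levelSubgroup {n : ℕ} {x : RoI K} :
    x ∈ levelSubgroup K hq n ↔ ‖(x : K)‖ ≤ (q : ℝ) ^ (-(n : ℤ)) := by
  show dist x 0 ≤ _ ↔ _
  rw [dist_zero_right]
  rfl

lemma mk_eq_mk_iff_mem_disc {n : ℕ} {x a : RoI K} :
    (x : RoI K ⧸ levelSubgroup K hq n) = a ↔ x ∈ disc K q a n := by
  rw [QuotientAddGroup.eq, neg_add_eq_sub, ← neg_sub, neg_mem_iff]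
  exact mem_levelSubgroup hq

lemma mk_preimage_eq_disc {n : ℕ} (a : RoI K) :
    QuotientAddGroup.mk ⁻¹' {(a : RoI K ⧸ levelSubgroup K hq n)} = disc K q a n :=
  Set.ext fun _ => mk_eq_mk_iff_mem_disc hq

variable (hπ : ‖(π : K)‖ = (q : ℝ)⁻¹)
include hπ

lemma norm_coe_pi_pow (k : ℕ) : ‖((π ^ k : RoI K) : K)‖ = (q : ℝ) ^ (-(k : ℤ)) := by
  rw [SubmonoidClass.coe_pow, norm_pow, hπ, zpow_neg, zpow_natCast, inv_pow]

lemma pi_pow_mul_mem_levelSubgroup_iff {k n : ℕ} {y : RoI K} :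
    π ^ k * y ∈ levelSubgroup K hq (n + k) ↔ y ∈ levelSubgroup K hq n := by
  rw [mem_levelSubgroup, mem_levelSubgroup, MulMemClass.coe_mul, norm_mul, norm_coe_pi_pow hπ,
    Nat.cast_add, neg_add, zpow_add₀ (by positivity), mul_comm ((q : ℝ) ^ (-(n : ℤ))),
    mul_le_mul_iff_right₀ (by positivity)]

lemma pi_pow_mul_mem_levelSubgroup (n : ℕ) (y : RoI K) : π ^ n * y ∈ levelSubgroup K hq n := by
  simpa using (pi_pow_mul_mem_levelSubgroup_iff hq hπ (n := 0)).2
    ((mem_levelSubgroup hq).2 (by simpa using norm_coe_le_one y))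

lemma exists_eq_pi_pow_mul_of_mem {n : ℕ} {x : RoI K} (hx : x ∈ levelSubgroup K hq n) :
    ∃ y, x = π ^ n * y := by
  have hπn : ((π ^ n : RoI K) : K) ≠ 0 := by
    rw [← norm_ne_zero_iff, norm_coe_pi_pow hπ]
    positivity
  refine ⟨⟨(x : K) / (π ^ n : RoI K), ?_⟩, Subtype.ext (by rw [MulMemClass.coe_mul]; field_simp)⟩
  show ‖(x : K) / (π ^ n : RoI K)‖ ≤ 1
  rw [norm_div, norm_coe_pi_pow hπ, div_le_one (by positivity)]
  exact (mem_levelSubgroup hq).1 hx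

lemma exists_digits_sub_mem_levelSubgroup (s : RoI K ⧸ Ideal.span {π} → RoI K)
    (hs : ∀ c, Ideal.Quotient.mk _ (s c) = c) (n : ℕ) (x : RoI K) :
    ∃ t : Fin n → RoI K ⧸ Ideal.span {π},
      x - ∑ j, s (t j) * π ^ (j : ℕ) ∈ levelSubgroup K hq n := by
  induction n generalizing x with
  | zero => exact ⟨Fin.elim0, by simpa [mem_levelSubgroup hq] using norm_coe_le_one x⟩
  | succ n ih =>
    obtain ⟨y, hy⟩ :=
      Ideal.mem_span_singleton'.1 (Ideal.Quotient.eq.1 (hs (Ideal.Quotient.mk _ x)).symm)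
    obtain ⟨t, ht⟩ := ih y
    let t' : Fin (n + 1) → RoI K ⧸ Ideal.span {π} := Fin.cons (Ideal.Quotient.mk _ x) t
    refine ⟨t', ?_⟩
    have hshift : x - ∑ j, s (t' j) * π ^ (j : ℕ) = π ^ 1 * (y - ∑ j, s (t j) * π ^ (j : ℕ)) := by
      simp only [t', Fin.sum_univ_succ, Fin.cons_zero, Fin.cons_succ, Fin.val_zero, Fin.val_succ,
        pow_zero, mul_one, pow_succ, ← mul_assoc, ← Finset.sum_mul]
      linear_combination -hy
    rw [hshift]
    exact (pi_pow_mul_mem_levelSubgroup_iff hq hπ).2 ht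

lemma natCard_quotient_levelSubgroup_le (hres : Nat.card (RoI K ⧸ Ideal.span {π}) = q) (n : ℕ) :
    Nat.card (RoI K ⧸ levelSubgroup K hq n) ≤ q ^ n := by
  have : Finite (RoI K ⧸ Ideal.span {π}) := Nat.finite_of_card_ne_zero (hres ▸ hq.ne')
  set s := Function.surjInv (Ideal.Quotient.mk_surjective (I := Ideal.span {π}))
  have hsurj : Function.Surjective fun t : Fin n → RoI K ⧸ Ideal.span {π} =>
      ((∑ j, s (t j) * π ^ (j : ℕ) : RoI K) : RoI K ⧸ levelSubgroup K hq n) := by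
    intro c
    obtain ⟨x, rfl⟩ := QuotientAddGroup.mk_surjective c
    obtain ⟨t, ht⟩ := exists_digits_sub_mem_levelSubgroup hq hπ s (Function.surjInv_eq _) n x
    exact ⟨t, QuotientAddGroup.eq.2 (by rwa [neg_add_eq_sub])⟩
  calc _ ≤ Nat.card (Fin n → RoI K ⧸ Ideal.span {π}) := Nat.card_le_card_of_surjective _ hsurj
    _ = q ^ n := by rw [Nat.card_fun, hres, Nat.card_eq_fintype_card, Fintype.card_fin]

end IntegerRing

section Koksma

variable {K} {q} {π}

omit [LocallyCompactSpace K] [BorelSpace K] in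
open Finset in
lemma abs_card_filter_div_sub_le_discrepancy (μ : Measure (RoI K)) [IsProbabilityMeasure μ]
    (X : Finset (RoI K)) {D : Set (RoI K)} (hD : IsDisc K q D) [DecidablePred (· ∈ D)] :
    |(#(X.filter (· ∈ D)) : ℝ) / #X - μ.real D| ≤ discrepancy K q μ X := by
  have hcount (D : Set (RoI K)) : Nat.card ↥((X : Set (RoI K)) ∩ D) ≤ #X := by
    rw [Nat.card_coe_set_eq, ← Set.ncard_coe_finset X]
    exact Set.ncard_le_ncard Set.inter_subset_left X.finite_toSet
  have hbdd : BddAbove (Set.range fun D : {D : Set (RoI K) // IsDisc K q D} =>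
      |(Nat.card ↥((X : Set (RoI K)) ∩ D.1) : ℝ) / #X - (μ D.1).toReal|) :=
    ⟨1, Set.forall_mem_range.2 fun D => abs_sub_le_of_nonneg_of_le (by positivity)
      (div_le_one_of_le₀ (by exact_mod_cast hcount D.1) (by positivity)) ENNReal.toReal_nonneg
      measureReal_le_one⟩
  have hfilter : Nat.card ↥((X : Set (RoI K)) ∩ D) = #(X.filter (· ∈ D)) := by
    rw [Nat.card_coe_set_eq, ← Set.ncard_coe_finset]
    congr 1
    ext
    simp
  have h := le_ciSup hbdd ⟨D, hD⟩
  dsimp only at h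
  rwa [hfilter] at h

omit [LocallyCompactSpace K] [BorelSpace K] in
lemma discrepancy_nonneg (μ : Measure (RoI K)) [IsProbabilityMeasure μ] (X : Finset (RoI K)) :
    0 ≤ discrepancy K q μ X := by
  classical
  exact (abs_nonneg _).trans (abs_card_filter_div_sub_le_discrepancy μ X ⟨0, 0, rfl⟩)

instance (hq : 0 < q) (n : ℕ) : Finite (RoI K ⧸ levelSubgroup K hq n) :=
  AddSubgroup.quotient_finite_of_isOpen _ (OpenAddSubgroup.isOpen _)

omit [MeasurableSpace K] [BorelSpace K] in
lemma liftChar_apply_pi_pow_mul (hq : 0 < q) (hπ : ‖(π : K)‖ = (q : ℝ)⁻¹) {n : ℕ}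
    (ψ : AddChar (RoI K ⧸ levelSubgroup K hq n) ℂ) (y : RoI K) :
    liftChar _ ψ (π ^ n * y) = 1 := by
  have hy : ((π ^ n * y : RoI K) : RoI K ⧸ levelSubgroup K hq n) = 0 :=
    (QuotientAddGroup.eq_zero_iff _).2 (pi_pow_mul_mem_levelSubgroup hq hπ n y)
  ext1
  simp [hy]

open Finset in
lemma norm_average_addChar_le (hq : 0 < q) (hπ : ‖(π : K)‖ = (q : ℝ)⁻¹)
    (hres : Nat.card (RoI K ⧸ Ideal.span {π}) = q) (μ : Measure (RoI K)) [IsProbabilityMeasure μ]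
    [μ.IsAddHaarMeasure] {n : ℕ} {ψ : AddChar (RoI K ⧸ levelSubgroup K hq n) ℂ} (hψ : ψ ≠ 0)
    {X : Finset (RoI K)} (hX : X.Nonempty) :
    ‖(#X : ℂ)⁻¹ * ∑ x ∈ X, ψ x‖ ≤ q ^ charLevel K π (liftChar _ ψ) * discrepancy K q μ X := by
  classical
  set ℓ := charLevel K π (liftChar _ ψ)
  obtain ⟨ψ', hψ'⟩ := AddChar.exists_comp_mk_eq (H := levelSubgroup K hq ℓ)
    (ψ.compAddMonoidHom (QuotientAddGroup.mk' _)) fun h hh => by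
      obtain ⟨y, rfl⟩ := exists_eq_pi_pow_mul_of_mem hq hπ hh
      simpa using congrArg ((↑) : Circle → ℂ)
        (apply_pi_pow_charLevel_mul (liftChar_apply_pi_pow_mul hq hπ ψ) y)
  have hψ'0 : ψ' ≠ 0 := by
    rintro rfl
    refine hψ (DFunLike.ext _ _ fun a => ?_)
    obtain ⟨x, rfl⟩ := QuotientAddGroup.mk_surjective a
    simpa using (hψ' x).symm
  have hweyl := norm_sum_addChar_le μ hψ'0 hX (Δ := discrepancy K q μ X) fun a => by
    obtain ⟨b, rfl⟩ := QuotientAddGroup.mk_surjective a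
    simp_rw [mk_eq_mk_iff_mem_disc, mk_preimage_eq_disc]
    exact abs_card_filter_div_sub_le_discrepancy μ X ⟨b, ℓ, rfl⟩
  have hcard : (Nat.card (RoI K ⧸ levelSubgroup K hq ℓ) : ℝ) ≤ q ^ ℓ := by
    exact_mod_cast natCard_quotient_levelSubgroup_le hq hπ hres ℓ
  have hΔ := discrepancy_nonneg (q := q) μ X
  have hN : (0 : ℝ) < #X := by exact_mod_cast hX.card_pos
  have hsum : ∑ x ∈ X, ψ x = ∑ x ∈ X, ψ' x := sum_congr rfl fun x _ => (hψ' x).symm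
  rw [norm_mul, norm_inv, Complex.norm_natCast, hsum]
  calc (#X : ℝ)⁻¹ * ‖∑ x ∈ X, ψ' x‖ ≤ (#X : ℝ)⁻¹ * (q ^ ℓ * (#X * discrepancy K q μ X)) := by
        gcongr
        exact hweyl.trans (by gcongr)
    _ = q ^ ℓ * discrepancy K q μ X := by field_simp

omit [BorelSpace K] in
open Finset in
lemma sum_le_VFourier (hq : 0 < q) (μ : Measure (RoI K)) (f : RoI K → ℝ) (n : ℕ) :
    ∑ ψ ∈ univ.erase (0 : AddChar (RoI K ⧸ levelSubgroup K hq n) ℂ),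
      ENNReal.ofReal (q ^ charLevel K π (liftChar _ ψ)
        * ‖fourierCoeff K μ (fun x => (f x : ℂ)) (liftChar _ ψ)‖) ≤ VFourier K q π μ f := by
  classical
  set S := {γ : AddChar (RoI K) Circle | Continuous γ ∧ γ ≠ 1}
  set F := fun γ : AddChar (RoI K) Circle =>
    ENNReal.ofReal (q ^ charLevel K π γ * ‖fourierCoeff K μ (fun x => (f x : ℂ)) γ‖)
  calc _ = ∑ ψ ∈ univ.erase 0, S.indicator F (liftChar _ ψ) :=
        sum_congr rfl fun ψ hψ => (Set.indicator_of_mem (s := S)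
          ⟨continuous_liftChar ψ, liftChar_ne_one (ne_of_mem_erase hψ)⟩ F).symm
    _ = ∑ γ ∈ (univ.erase 0).map ⟨liftChar (levelSubgroup K hq n), liftChar_injective⟩,
          S.indicator F γ := by
        rw [sum_map]
        rfl
    _ ≤ ∑' γ, S.indicator F γ := ENNReal.sum_le_tsum _
    _ = VFourier K q π μ f := (tsum_subtype S F).symm

open Finset in
lemma levelwise_koksma (hq : 0 < q) (hπ : ‖(π : K)‖ = (q : ℝ)⁻¹)
    (hres : Nat.card (RoI K ⧸ Ideal.span {π}) = q) (μ : Measure (RoI K)) [IsProbabilityMeasure μ]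
    [μ.IsAddHaarMeasure] (f : RoI K → ℝ) (hf : Continuous f) {X : Finset (RoI K)}
    (hX : X.Nonempty) (n : ℕ) :
    ENNReal.ofReal |(#X : ℝ)⁻¹ * ∑ x ∈ X, ⨍ y in disc K q x n, f y ∂μ - ∫ x, f x ∂μ|
      ≤ VFourier K q π μ f * ENNReal.ofReal (discrepancy K q μ X) := by
  classical
  set c := fun ψ : AddChar (RoI K ⧸ levelSubgroup K hq n) ℂ =>
    fourierCoeff K μ (fun x => (f x : ℂ)) (liftChar _ ψ)
  set ℓ := fun ψ : AddChar (RoI K ⧸ levelSubgroup K hq n) ℂ => charLevel K π (liftChar _ ψ)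
  have hint : Integrable (fun x => (f x : ℂ)) μ :=
    (Complex.continuous_ofReal.comp hf).integrable_of_hasCompactSupport
      (HasCompactSupport.of_compactSpace _)
  have hexpand := average_setAverage_sub_integral_eq_sum (H := levelSubgroup K hq n) μ _ hint hX
  simp only [mk_preimage_eq_disc] at hexpand
  have hcast : (((#X : ℝ)⁻¹ * ∑ x ∈ X, ⨍ y in disc K q x n, f y ∂μ - ∫ x, f x ∂μ : ℝ) : ℂ)
      = (#X : ℂ)⁻¹ * ∑ x ∈ X, ⨍ y in disc K q x n, (f y : ℂ) ∂μ - ∫ x, (f x : ℂ) ∂μ := by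
    simp only [average, integral_complex_ofReal]
    push_cast
    rfl
  have hΔ := discrepancy_nonneg (q := q) μ X
  calc ENNReal.ofReal |(#X : ℝ)⁻¹ * ∑ x ∈ X, ⨍ y in disc K q x n, f y ∂μ - ∫ x, f x ∂μ|
      ≤ ENNReal.ofReal (∑ ψ ∈ univ.erase 0, q ^ ℓ ψ * ‖c ψ‖ * discrepancy K q μ X) := by
        refine ENNReal.ofReal_le_ofReal ?_
        rw [← Real.norm_eq_abs, ← Complex.norm_real, hcast, hexpand]
        refine (norm_sum_le _ _).trans (sum_le_sum fun ψ hψ => ?_)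
        rw [norm_mul]
        calc _ ≤ ‖c ψ‖ * (q ^ ℓ ψ * discrepancy K q μ X) := mul_le_mul_of_nonneg_left
              (norm_average_addChar_le hq hπ hres μ (ne_of_mem_erase hψ) hX) (norm_nonneg _)
          _ = _ := by ring
    _ = (∑ ψ ∈ univ.erase 0, ENNReal.ofReal (q ^ ℓ ψ * ‖c ψ‖))
          * ENNReal.ofReal (discrepancy K q μ X) := by
        rw [ENNReal.ofReal_sum_of_nonneg fun _ _ => by positivity, sum_mul]
        exact sum_congr rfl fun _ _ => ENNReal.ofReal_mul (by positivity)
    _ ≤ VFourier K q π μ f * ENNReal.ofReal (discrepancy K q μ X) := by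
        gcongr
        exact sum_le_VFourier hq μ f n

omit [LocallyCompactSpace K] in
lemma tendsto_setAverage_disc (hq : 1 < q) (μ : Measure (RoI K)) [IsFiniteMeasure μ]
    [μ.IsOpenPosMeasure] {f : RoI K → ℝ} (hf : Continuous f) (x : RoI K) :
    Tendsto (fun n : ℕ => ⨍ y in disc K q x n, f y ∂μ) atTop (𝓝 (f x)) := by
  have hr (n : ℕ) : 0 < (q : ℝ) ^ (-(n : ℤ)) := by positivity
  refine tendsto_setAverage_of_continuousAt hf.continuousAt (hf.stronglyMeasurableAtFilter μ _)
    ?_ fun n => ?_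
  · rw [show disc K q x = fun n : ℕ => Metric.closedBall x ((q : ℝ) ^ (-(n : ℤ))) from
      funext (disc_eq_closedBall x)]
    refine (tendsto_closedBall_smallSets x).comp ?_
    have hq' : (1 : ℝ) < q := by exact_mod_cast hq
    exact (tendsto_inv_atTop_zero.comp (tendsto_pow_atTop_atTop_of_one_lt hq')).congr
      fun n => by simp
  · rw [disc_eq_closedBall]
    exact (IsUltrametricDist.isOpen_closedBall x (hr n).ne').measure_ne_zero μ
      ⟨x, Metric.mem_closedBall_self (hr n).le⟩

end Koksma

theorem fourier_koksma_inequality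
    (hq : 1 < q)
    (hπ : ‖(π : K)‖ = (q : ℝ)⁻¹)
    (hres : Nat.card (↥(RoI K) ⧸ (Ideal.span {π} : Ideal ↥(RoI K))) = q)
    (μ : Measure (RoI K)) [IsProbabilityMeasure μ] [μ.IsAddHaarMeasure]
    (f : RoI K → ℝ) (hf : Continuous f)
    (X : Finset (RoI K)) (hX : X.Nonempty) :
    ENNReal.ofReal |(X.card : ℝ)⁻¹ * ∑ x ∈ X, f x - ∫ x, f x ∂μ| ≤
      VFourier K q π μ f * ENNReal.ofReal (discrepancy K q μ X) := by
  have hlim : Tendsto (fun n => (X.card : ℝ)⁻¹ * ∑ x ∈ X, ⨍ y in disc K q x n, f y ∂μ) atTop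
      (𝓝 ((X.card : ℝ)⁻¹ * ∑ x ∈ X, f x)) :=
    (tendsto_finsetSum X fun x _ => tendsto_setAverage_disc hq μ hf x).const_mul _
  exact le_of_tendsto' (ENNReal.tendsto_ofReal (hlim.sub_const _).abs)
    (levelwise_koksma (zero_lt_one.trans hq) hπ hres μ f hf hX)

end NAKoksma
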